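/- A family 𝔍 of subsets of N = {1,…,n} equals the cofinality class 𝔠(f) of some continuous map f : 𝖱^n → 𝖱 if and only if 𝔍 ⊆ 𝒫(N)∖{∅} and 𝔍 is upward closed, i.e., whenever I ∈ 𝔍 and I ⊆ J ⊆ N then J ∈ 𝔍. Consequently, the cofinality classes of continuous maps 𝖱^n → 𝖱 are in bijection with the antichains of 𝒫(N)∖{∅}, each class corresponding to the antichain of its minimal elements (the empty antichain corresponding to bounded maps). -/

import Mathlib

/-!
For a continuous `G : 𝖱 × 𝖱 → 𝖱`, call the height `t` unbounded if `s ↦ G (s, t)` is unbounded.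
Countable subsets of `𝖱` are bounded and `𝖱` is first countable, so every increasing sequence
converges to its supremum. Chasing values of `G` along such sequences shows that the unbounded
heights form a clopen set, hence none or all of `𝖱` (which is connected), and that if all heights
are unbounded then `G` is unbounded on the diagonal. For `I ⊆ J`, applying this to
`(s, t) ↦ f (s on I, t on J \ I, 0 elsewhere)` shows that `𝔠(f)` is upward closed; conversely
`x ↦ max_{I ∈ 𝔍} min_{i ∈ I} x_i` has cofinality class `𝔍` for every upward closed `𝔍 ∌ ∅`.
Upward closed families correspond to antichains through their minimal elements.
-/

noncomputable section
open Set

/-- The first uncountable ordinal `ω₁`. -/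
def Omega1 : Ordinal := Ordinal.omega 1

/-- The closed long ray `𝖱`: `ω₁ × [0,1)` with the lexicographic order. -/
def LongRay : Type 1 := {o : Ordinal // o < Omega1} ×ₗ (Set.Ico (0:ℝ) 1)

instance : LinearOrder LongRay :=
  inferInstanceAs (LinearOrder ({o : Ordinal // o < Omega1} ×ₗ (Set.Ico (0:ℝ) 1)))

/-- `𝖱` carries the order topology. -/
instance : TopologicalSpace LongRay := Preorder.topology LongRay
instance : OrderTopology LongRay := ⟨rfl⟩

lemma omega1_pos : (0 : Ordinal) < Omega1 := Ordinal.omega_pos 1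

/-- The point `0 = (0,0)` of the long ray. -/
def rayZero : LongRay := toLex (⟨0, omega1_pos⟩, ⟨0, by simp⟩)

/-- Identification of the countable ordinal `o` with the point `(o,0)` of the long ray
(junk value for `o ≥ ω₁`). -/
def ordR (o : Ordinal) : LongRay :=
  if h : o < Omega1 then toLex (⟨o, h⟩, ⟨0, by simp⟩) else rayZero

/-- The `I`-diagonal at height `c` (only the values of `c` off `I` are relevant). -/
def Delta (n : ℕ) (I : Finset (Fin n)) (c : Fin n → LongRay) : Set (Fin n → LongRay) :=
  {x | (∀ i ∈ I, ∀ i' ∈ I, x i = x i') ∧ ∀ j ∉ I, x j = c j}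

/-- `f` is `I`-cofinal if `f` restricted to `Δ_I = Δ_I(0)` is unbounded. -/
def ICofinal (n : ℕ) (f : (Fin n → LongRay) → LongRay) (I : Finset (Fin n)) : Prop :=
  ¬ BddAbove (f '' Delta n I (fun _ => rayZero))

/-- The cofinality class `𝔠(f) = {I : f is I-cofinal}`. -/
def cofClass (n : ℕ) (f : (Fin n → LongRay) → LongRay) : Set (Finset (Fin n)) :=
  {I | ICofinal n f I}

/-- `M_I(c) = {x : x_i ≥ c for all i ∈ I}`. -/
def MSet (n : ℕ) (I : Finset (Fin n)) (c : LongRay) : Set (Fin n → LongRay) :=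
  {x | ∀ i ∈ I, c ≤ x i}

/-- `E_I(b,d) = {x ∈ M_I(d) : x_j = b_j for all j ∉ I}`. -/
def ESet (n : ℕ) (I : Finset (Fin n)) (b : Fin n → LongRay) (d : LongRay) :
    Set (Fin n → LongRay) :=
  {x | (∀ i ∈ I, d ≤ x i) ∧ ∀ j ∉ I, x j = b j}

open Filter Topology

lemma exists_strictMono_seq_of_forall_exists_gt {α : Type*} [Preorder α]
    (P : ℕ → α → α → Prop) (h : ∀ k a, ∃ b, a < b ∧ P k a b) (a : α) :
    ∃ s : ℕ → α, s 0 = a ∧ StrictMono s ∧ ∀ k, P k (s k) (s (k + 1)) := by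
  choose f hf using h
  let s : ℕ → α := fun k => Nat.rec a (fun k b => f k b) k
  exact ⟨s, rfl, strictMono_nat_of_lt_succ fun k => (hf k (s k)).1, fun k => (hf k (s k)).2⟩

lemma StrictMono.lt_of_tendsto_of_lt {α : Type*} [LinearOrder α] [TopologicalSpace α]
    [OrderClosedTopology α] {s u : ℕ → α} {a : α} (hs : StrictMono s)
    (hu : Tendsto u atTop (𝓝 a)) (h : ∀ k, s k < u k) : s 0 < a := by
  refine (hs zero_lt_one).trans_le (ge_of_tendsto hu ?_)
  filter_upwards [eventually_ge_atTop 1] with k hk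
  exact (hs.monotone hk).trans (h k).le

namespace LongRay

def ord (x : LongRay) : Ordinal := (ofLex x).1

def frac (x : LongRay) : ℝ := (ofLex x).2

lemma ord_lt_omega1 (x : LongRay) : x.ord < Omega1 := (ofLex x).1.2

lemma frac_mem_Ico (x : LongRay) : x.frac ∈ Ico (0 : ℝ) 1 := (ofLex x).2.2

def mk (o : Ordinal) (ho : o < Omega1) (r : ℝ) (hr : r ∈ Ico (0 : ℝ) 1) : LongRay :=
  toLex (⟨o, ho⟩, ⟨r, hr⟩)

@[simp] lemma ord_mk {o ho r hr} : (mk o ho r hr).ord = o := rfl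

@[simp] lemma frac_mk {o ho r hr} : (mk o ho r hr).frac = r := rfl

lemma lt_iff {x y : LongRay} : x < y ↔ x.ord < y.ord ∨ x.ord = y.ord ∧ x.frac < y.frac := by
  refine Prod.Lex.lt_iff.trans ?_
  rw [Subtype.ext_iff]
  rfl

lemma ord_monotone : Monotone ord :=
  fun _ _ h => not_lt.1 fun h' => h.not_gt (lt_iff.2 (Or.inl h'))

lemma ord_frac_injective : Function.Injective fun x : LongRay => (x.ord, x.frac) := by
  intro x y h
  simp only [Prod.mk.injEq] at h
  exact congrArg toLex (Prod.ext (Subtype.ext h.1) (Subtype.ext h.2))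

instance : OrderBot LongRay where
  bot := rayZero
  bot_le x := not_lt.1 fun h => by
    rcases lt_iff.1 h with h | ⟨-, h⟩
    · exact (zero_le : (0 : Ordinal) ≤ x.ord).not_gt h
    · exact (frac_mem_Ico x).1.not_gt h

lemma bot_eq_rayZero : (⊥ : LongRay) = rayZero := rfl

lemma countable_Iic_ord (x : LongRay) : (Iic x.ord).Countable := by
  rw [← Iio_insert]
  refine Countable.insert _ ?_
  rw [← Cardinal.le_aleph0_iff_set_countable, Cardinal.mk_Iio_ordinal, Cardinal.lift_le_aleph0,
    ← Cardinal.lt_aleph_one_iff, ← Cardinal.lt_omega_iff_card_lt]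
  exact x.ord_lt_omega1

lemma bddAbove_of_countable {S : Set LongRay} (hS : S.Countable) : BddAbove S := by
  have := hS.to_subtype
  set σ := ⨆ x : S, (x : LongRay).ord
  have hσ : Order.succ σ < Omega1 :=
    (Cardinal.isSuccLimit_omega 1).succ_lt (Ordinal.iSup_lt_omega_one fun x => ord_lt_omega1 _)
  refine ⟨mk _ hσ 0 ⟨le_rfl, one_pos⟩, fun x hx => (lt_iff.2 (Or.inl ?_)).le⟩
  exact (le_ciSup Ordinal.bddAbove_of_small (⟨x, hx⟩ : S)).trans_lt (Order.lt_succ σ)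

def ratPoints : Set LongRay := {x | ∃ q : ℚ, x.frac = q}

lemma exists_ratPoints_btwn {x y : LongRay} (h : x < y) : ∃ d ∈ ratPoints, x < d ∧ d < y := by
  rcases lt_iff.1 h with h | ⟨h, h'⟩
  · obtain ⟨q, hxq, hq1⟩ := exists_rat_btwn (frac_mem_Ico x).2
    refine ⟨mk x.ord x.ord_lt_omega1 q ⟨(frac_mem_Ico x).1.trans hxq.le, hq1⟩, ⟨q, rfl⟩,
      lt_iff.2 (Or.inr ⟨rfl, hxq⟩), lt_iff.2 (Or.inl h)⟩
  · obtain ⟨q, hxq, hqy⟩ := exists_rat_btwn h'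
    refine ⟨mk x.ord x.ord_lt_omega1 q ⟨(frac_mem_Ico x).1.trans hxq.le,
      hqy.trans (frac_mem_Ico y).2⟩, ⟨q, rfl⟩, lt_iff.2 (Or.inr ⟨rfl, hxq⟩),
      lt_iff.2 (Or.inr ⟨h, hqy⟩)⟩

lemma countable_ratPoints_inter_Iic (y : LongRay) : (ratPoints ∩ Iic y).Countable := by
  refine (Set.MapsTo.countable_of_injOn (f := fun x : LongRay => (x.ord, x.frac))
    (t := Iic y.ord ×ˢ range ((↑) : ℚ → ℝ)) ?_ ord_frac_injective.injOn
    ((countable_Iic_ord y).prod (countable_range _)))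
  rintro x ⟨⟨q, hq⟩, hxy⟩
  exact ⟨ord_monotone hxy, q, hq.symm⟩

instance : NoMaxOrder LongRay where
  exists_gt x := by
    obtain ⟨h0, h1⟩ := frac_mem_Ico x
    exact ⟨mk x.ord x.ord_lt_omega1 ((x.frac + 1) / 2) ⟨by linarith, by linarith⟩,
      lt_iff.2 (Or.inr ⟨rfl, show x.frac < (x.frac + 1) / 2 by linarith⟩)⟩

instance : DenselyOrdered LongRay where
  dense _ _ h := by
    obtain ⟨d, -, hd⟩ := exists_ratPoints_btwn h
    exact ⟨d, hd⟩

lemma exists_isGLB {S : Set LongRay} (hS : S.Nonempty) : ∃ z, IsGLB S z := by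
  obtain ⟨x₀, hx₀S, hx₀⟩ : sInf (ord '' S) ∈ ord '' S := csInf_mem (hS.image _)
  set γ := sInf (ord '' S)
  set F := frac '' {x ∈ S | x.ord = γ}
  have hx₀F : x₀.frac ∈ F := mem_image_of_mem _ ⟨hx₀S, hx₀⟩
  have hF : BddBelow F := ⟨0, forall_mem_image.2 fun x _ => (frac_mem_Ico x).1⟩
  have hρ : sInf F ∈ Ico (0 : ℝ) 1 :=
    ⟨le_csInf ⟨_, hx₀F⟩ (forall_mem_image.2 fun x _ => (frac_mem_Ico x).1),
      (csInf_le hF hx₀F).trans_lt (frac_mem_Ico x₀).2⟩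
  refine ⟨mk γ (hx₀ ▸ x₀.ord_lt_omega1) _ hρ, fun s hs => not_lt.1 fun h => ?_,
    fun l hl => not_lt.1 fun h => ?_⟩
  · rcases lt_iff.1 h with h | ⟨h, h'⟩
    · exact (csInf_le' (mem_image_of_mem _ hs)).not_gt h
    · exact (csInf_le hF (mem_image_of_mem _ ⟨hs, h⟩)).not_gt h'
  · rcases lt_iff.1 h with h | ⟨h, h'⟩
    · exact (ord_monotone (hl hx₀S)).not_gt (hx₀ ▸ h)
    · obtain ⟨_, ⟨x, ⟨hxS, hx⟩, rfl⟩, hxl⟩ := exists_lt_of_csInf_lt ⟨_, hx₀F⟩ h'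
      exact (hl hxS).not_gt (lt_iff.2 (Or.inr ⟨hx.trans h, hxl⟩))

lemma exists_isLUB {S : Set LongRay} (hS : BddAbove S) : ∃ z, IsLUB S z :=
  (exists_isGLB hS).imp fun _ => isGLB_upperBounds.1

open Classical in
instance : ConditionallyCompleteLinearOrder LongRay where
  __ := (inferInstance : LinearOrder LongRay)
  __ := LinearOrder.toLattice
  sSup S := if h : S.Nonempty ∧ BddAbove S then (exists_isLUB h.2).choose else ⊥
  sInf S := if h : S.Nonempty then (exists_isGLB h).choose else ⊥
  isLUB_csSup S hne h := by
    simpa only [dif_pos (show S.Nonempty ∧ BddAbove S from ⟨hne, h⟩)] using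
      (exists_isLUB h).choose_spec
  isGLB_csInf S h _ := by simpa only [dif_pos h] using (exists_isGLB h).choose_spec
  csSup_of_not_bddAbove S h := by
    simp only [h, and_false, Set.not_nonempty_empty, false_and, dite_false]
  csInf_of_not_bddBelow S h := (h (OrderBot.bddBelow S)).elim

instance : FirstCountableTopology LongRay where
  nhds_generated_countable x := by
    obtain ⟨y, hxy⟩ := exists_gt x
    have hleft : ⨅ b ∈ Iio x, 𝓟 (Ioi b) = ⨅ b ∈ Ioi '' (ratPoints ∩ Iio x), 𝓟 b := by
      rw [iInf_image]
      refine le_antisymm (biInf_mono inter_subset_right) (le_iInf₂ fun b hb => ?_)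
      obtain ⟨d, hd, hbd, hdx⟩ := exists_ratPoints_btwn hb
      exact iInf₂_le_of_le d ⟨hd, hdx⟩ (principal_mono.2 (Ioi_subset_Ioi hbd.le))
    have hright : ⨅ b ∈ Ioi x, 𝓟 (Iio b) = ⨅ b ∈ Iio '' (ratPoints ∩ Ioo x y), 𝓟 b := by
      rw [iInf_image]
      refine le_antisymm (biInf_mono fun d hd => hd.2.1) (le_iInf₂ fun b hb => ?_)
      obtain ⟨d, hd, hxd, hdb⟩ := exists_ratPoints_btwn (lt_min hb hxy)
      exact iInf₂_le_of_le d ⟨hd, hxd, hdb.trans_le (min_le_right _ _)⟩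
        (principal_mono.2 (Iio_subset_Iio (hdb.le.trans (min_le_left _ _))))
    rw [nhds_eq_order, hleft, hright]
    have := isCountablyGenerated_biInf_principal ((countable_ratPoints_inter_Iic x).mono
      (inter_subset_inter_right _ Iio_subset_Iic_self) |>.image Ioi)
    have := isCountablyGenerated_biInf_principal
      (((countable_ratPoints_inter_Iic y).mono
        (inter_subset_inter_right _ fun _ h => (h : _ ∈ Ioo x y).2.le)).image Iio)
    infer_instance

lemma tendsto_atTop_iSup_of_monotone {s : ℕ → LongRay} (hs : Monotone s) :
    Tendsto s atTop (𝓝 (⨆ k, s k)) :=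
  tendsto_atTop_ciSup hs (bddAbove_of_countable (countable_range s))

section Plane

variable {G : LongRay × LongRay → LongRay}

lemma exists_gt_lt_apply_of_not_bddAbove (hG : Continuous G) {t : LongRay}
    (h : ¬BddAbove (range fun s => G (s, t))) (m : LongRay) : ∃ s, m < s ∧ m < G (s, t) := by
  obtain ⟨c, hc⟩ := (isCompact_Icc.prod isCompact_Icc).bddAbove_image hG.continuousOn
    (K := Icc ⊥ (m ⊔ t) ×ˢ Icc ⊥ (m ⊔ t))
  obtain ⟨_, ⟨s, rfl⟩, hs⟩ := not_bddAbove_iff.1 h (c ⊔ m)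
  refine ⟨s, not_le.1 fun hsm => ?_, le_sup_right.trans_lt hs⟩
  have : G (s, t) ≤ c :=
    hc (mem_image_of_mem G ⟨⟨bot_le, hsm.trans le_sup_left⟩, ⟨bot_le, le_sup_right⟩⟩)
  exact (le_sup_left.trans_lt hs).not_ge this

lemma not_bddAbove_line_of_tendsto (hG : Continuous G) {t : ℕ → LongRay} {τ : LongRay}
    (ht : Tendsto t atTop (𝓝 τ)) (h : ∀ k, ¬BddAbove (range fun s => G (s, t k))) :
    ¬BddAbove (range fun s => G (s, τ)) := by
  refine not_bddAbove_iff.2 fun c => ?_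
  obtain ⟨s, rfl, hs, hst⟩ := exists_strictMono_seq_of_forall_exists_gt
    (fun k a b => a < G (b, t (k + 1)))
    (fun k => exists_gt_lt_apply_of_not_bddAbove hG (h (k + 1))) c
  have hp : Tendsto (fun k => (s (k + 1), t (k + 1))) atTop (𝓝 (⨆ k, s k, τ)) :=
    (((tendsto_atTop_iSup_of_monotone hs.monotone).comp (tendsto_add_atTop_nat 1)).prodMk_nhds
      (ht.comp (tendsto_add_atTop_nat 1)))
  exact ⟨_, mem_range_self _, hs.lt_of_tendsto_of_lt ((hG.tendsto _).comp hp) hst⟩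

lemma bddAbove_line_of_tendsto (hG : Continuous G) {t : ℕ → LongRay} {τ : LongRay}
    (ht : Tendsto t atTop (𝓝 τ)) (h : ∀ k, BddAbove (range fun s => G (s, t k))) :
    BddAbove (range fun s => G (s, τ)) := by
  choose c hc using h
  obtain ⟨C, hC⟩ := bddAbove_of_countable (countable_range c)
  refine by_contra fun hτ => ?_
  obtain ⟨_, ⟨s, rfl⟩, hs⟩ := not_bddAbove_iff.1 hτ C
  have hlim : Tendsto (fun k => G (s, t k)) atTop (𝓝 (G (s, τ))) :=
    (hG.tendsto _).comp (tendsto_const_nhds.prodMk_nhds ht)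
  obtain ⟨k, hk⟩ := (hlim.eventually_const_lt hs).exists
  exact (hc k (mem_range_self s)).trans (hC (mem_range_self k)) |>.not_gt hk

lemma isClopen_setOf_not_bddAbove_line (hG : Continuous G) :
    IsClopen {t | ¬BddAbove (range fun s => G (s, t))} := by
  refine ⟨IsSeqClosed.isClosed fun t τ hts ht => not_bddAbove_line_of_tendsto hG ht hts, ?_⟩
  refine isClosed_compl_iff.1 (IsSeqClosed.isClosed fun t τ hts ht => ?_)
  exact not_not.2 (bddAbove_line_of_tendsto hG ht fun k => not_not.1 (hts k))

lemma not_bddAbove_diag_of_forall_not_bddAbove_line (hG : Continuous G)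
    (h : ∀ t, ¬BddAbove (range fun s => G (s, t))) : ¬BddAbove (range fun t => G (t, t)) := by
  refine not_bddAbove_iff.2 fun c => ?_
  obtain ⟨s, rfl, hs, hst⟩ := exists_strictMono_seq_of_forall_exists_gt
    (fun _ a b => a < G (b, a)) (fun _ a => exists_gt_lt_apply_of_not_bddAbove hG (h a) a) c
  have hσ := tendsto_atTop_iSup_of_monotone hs.monotone
  exact ⟨_, mem_range_self _, hs.lt_of_tendsto_of_lt
    ((hG.tendsto _).comp ((hσ.comp (tendsto_add_atTop_nat 1)).prodMk_nhds hσ)) hst⟩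

theorem bddAbove_line_of_bddAbove_diag (hG : Continuous G)
    (h : BddAbove (range fun t => G (t, t))) (t : LongRay) :
    BddAbove (range fun s => G (s, t)) := by
  by_contra ht
  have hU := eq_univ_iff_forall.1 ((isClopen_setOf_not_bddAbove_line hG).eq_univ ⟨t, ht⟩)
  exact not_bddAbove_diag_of_forall_not_bddAbove_line hG hU h

end Plane

end LongRay

section Cofinality

open LongRay

variable {n : ℕ}

def diagPt (I : Finset (Fin n)) (t : LongRay) : Fin n → LongRay := fun i => if i ∈ I then t else ⊥

lemma diagPt_mem_Delta (I : Finset (Fin n)) (t : LongRay) :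
    diagPt I t ∈ Delta n I (fun _ => rayZero) :=
  ⟨fun i hi i' hi' => by simp only [diagPt, hi, hi', if_true],
    fun j hj => by simp only [diagPt, hj, if_false, bot_eq_rayZero]⟩

lemma Delta_eq_range_diagPt {I : Finset (Fin n)} (hI : I.Nonempty) :
    Delta n I (fun _ => rayZero) = range (diagPt I) := by
  obtain ⟨i₀, hi₀⟩ := hI
  refine Subset.antisymm (fun x hx => ⟨x i₀, funext fun i => ?_⟩) ?_
  · by_cases hi : i ∈ I
    · simp only [diagPt, hi, if_true, hx.1 i hi i₀ hi₀]
    · simp only [diagPt, hi, if_false, hx.2 i hi, bot_eq_rayZero]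
  · rintro _ ⟨t, rfl⟩
    exact diagPt_mem_Delta I t

lemma iCofinal_iff {f : (Fin n → LongRay) → LongRay} {I : Finset (Fin n)} (hI : I.Nonempty) :
    ICofinal n f I ↔ ¬BddAbove (range fun t => f (diagPt I t)) := by
  rw [ICofinal, Delta_eq_range_diagPt hI, ← range_comp]
  rfl

lemma not_iCofinal_empty (f : (Fin n → LongRay) → LongRay) : ¬ICofinal n f ∅ := by
  refine not_not.2 ((bddAbove_singleton (a := f fun _ => rayZero)).mono ?_)
  rintro _ ⟨x, hx, rfl⟩
  exact congrArg f (funext fun j => hx.2 j (Finset.notMem_empty j))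

def planePt (I J : Finset (Fin n)) (p : LongRay × LongRay) : Fin n → LongRay :=
  fun i => if i ∈ I then p.1 else diagPt J p.2 i

lemma continuous_planePt (I J : Finset (Fin n)) : Continuous (planePt I J) := by
  refine continuous_pi fun i => ?_
  by_cases hI : i ∈ I
  · simpa only [planePt, hI, if_true] using continuous_fst
  by_cases hJ : i ∈ J
  · simpa only [planePt, diagPt, hI, hJ, if_true, if_false] using continuous_snd
  · simpa only [planePt, diagPt, hI, hJ, if_false] using continuous_const

lemma planePt_diag {I J : Finset (Fin n)} (hIJ : I ⊆ J) (t : LongRay) :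
    planePt I J (t, t) = diagPt J t := by
  funext i
  by_cases hI : i ∈ I
  · simp only [planePt, diagPt, hI, hIJ hI, if_true]
  · simp only [planePt, hI, if_false]

lemma planePt_bot (I J : Finset (Fin n)) (s : LongRay) : planePt I J (s, ⊥) = diagPt I s := by
  funext i
  by_cases hI : i ∈ I
  · simp only [planePt, diagPt, hI, if_true]
  · by_cases hJ : i ∈ J <;> simp only [planePt, diagPt, hI, hJ, if_true, if_false]

theorem ICofinal.mono {f : (Fin n → LongRay) → LongRay} (hf : Continuous f)
    {I J : Finset (Fin n)} (hIJ : I ⊆ J) (hI : ICofinal n f I) : ICofinal n f J := by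
  obtain rfl | hIne := I.eq_empty_or_nonempty
  · exact absurd hI (not_iCofinal_empty f)
  rw [iCofinal_iff hIne] at hI
  rw [iCofinal_iff (hIne.mono hIJ)]
  intro hJ
  have hline := bddAbove_line_of_bddAbove_diag (hf.comp (continuous_planePt I J))
    (by simpa only [Function.comp_apply, planePt_diag hIJ] using hJ) ⊥
  simp only [Function.comp_apply, planePt_bot] at hline
  exact hI hline

def minCoord (I : Finset (Fin n)) (x : Fin n → LongRay) : LongRay :=
  if h : I.Nonempty then I.inf' h x else ⊥

lemma continuous_minCoord (I : Finset (Fin n)) : Continuous (minCoord I) := by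
  by_cases h : I.Nonempty
  · have : minCoord I = fun x => I.inf' h x := funext fun _ => dif_pos h
    exact this ▸ Continuous.finset_inf'_apply h fun i _ => continuous_apply i
  · have : minCoord I = fun _ => ⊥ := funext fun _ => dif_neg h
    exact this ▸ continuous_const

lemma minCoord_diagPt_of_subset {I J : Finset (Fin n)} (hI : I.Nonempty) (hIJ : I ⊆ J)
    (t : LongRay) : minCoord I (diagPt J t) = t := by
  rw [minCoord, dif_pos hI]
  obtain ⟨i, hi⟩ := hI
  refine le_antisymm (Finset.inf'_le_of_le _ hi ?_) (Finset.le_inf' _ _ fun j hj => ?_)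
  · simp only [diagPt, hIJ hi, if_true, le_refl]
  · simp only [diagPt, hIJ hj, if_true, le_refl]

lemma minCoord_diagPt_of_not_subset {I J : Finset (Fin n)} (hIJ : ¬I ⊆ J) (t : LongRay) :
    minCoord I (diagPt J t) = ⊥ := by
  obtain ⟨i, hiI, hiJ⟩ := Finset.not_subset.1 hIJ
  rw [minCoord, dif_pos ⟨i, hiI⟩]
  exact le_bot_iff.1 (Finset.inf'_le_of_le _ hiI (by simp [diagPt, hiJ]))

def maxMinCoord (𝔍 : Set (Finset (Fin n))) (x : Fin n → LongRay) : LongRay :=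
  (Set.toFinite 𝔍).toFinset.sup fun I => minCoord I x

lemma continuous_maxMinCoord (𝔍 : Set (Finset (Fin n))) : Continuous (maxMinCoord 𝔍) :=
  Continuous.finset_sup_apply fun I _ => continuous_minCoord I

lemma maxMinCoord_diagPt_of_mem {𝔍 : Set (Finset (Fin n))} (hempty : ∅ ∉ 𝔍) {J : Finset (Fin n)}
    (hJ : J ∈ 𝔍) (t : LongRay) : t ≤ maxMinCoord 𝔍 (diagPt J t) := by
  have hJne : J.Nonempty := Finset.nonempty_iff_ne_empty.2 fun h => hempty (h ▸ hJ)
  calc t = minCoord J (diagPt J t) := (minCoord_diagPt_of_subset hJne subset_rfl t).symm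
    _ ≤ _ := Finset.le_sup (f := fun I => minCoord I (diagPt J t))
      ((Set.Finite.mem_toFinset _).2 hJ)

lemma maxMinCoord_diagPt_of_not_mem {𝔍 : Set (Finset (Fin n))} (h𝔍 : IsUpperSet 𝔍)
    {J : Finset (Fin n)} (hJ : J ∉ 𝔍) (t : LongRay) : maxMinCoord 𝔍 (diagPt J t) = ⊥ :=
  (Finset.sup_eq_bot_iff _ _).2 fun _ hI => minCoord_diagPt_of_not_subset
    (fun hIJ => hJ (h𝔍 hIJ ((Set.Finite.mem_toFinset _).1 hI))) t

lemma cofClass_maxMinCoord {𝔍 : Set (Finset (Fin n))} (hempty : ∅ ∉ 𝔍) (h𝔍 : IsUpperSet 𝔍) :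
    cofClass n (maxMinCoord 𝔍) = 𝔍 := by
  ext J
  obtain rfl | hJ := J.eq_empty_or_nonempty
  · exact iff_of_false (not_iCofinal_empty _) hempty
  change ICofinal n _ J ↔ _
  rw [iCofinal_iff hJ]
  by_cases hJ𝔍 : J ∈ 𝔍
  · refine iff_of_true (fun ⟨b, hb⟩ => ?_) hJ𝔍
    obtain ⟨t, ht⟩ := exists_gt b
    exact ht.not_ge ((maxMinCoord_diagPt_of_mem hempty hJ𝔍 t).trans (hb (mem_range_self t)))
  · refine iff_of_false (not_not.2 ⟨⊥, ?_⟩) hJ𝔍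
    rintro _ ⟨t, rfl⟩
    exact (maxMinCoord_diagPt_of_not_mem h𝔍 hJ𝔍 t).le

theorem exists_continuous_cofClass_eq_iff (𝔍 : Set (Finset (Fin n))) :
    (∃ f, Continuous f ∧ cofClass n f = 𝔍) ↔ ∅ ∉ 𝔍 ∧ IsUpperSet 𝔍 := by
  refine ⟨?_, fun ⟨hempty, h𝔍⟩ => ⟨_, continuous_maxMinCoord 𝔍, cofClass_maxMinCoord hempty h𝔍⟩⟩
  rintro ⟨f, hf, rfl⟩
  exact ⟨not_iCofinal_empty f, fun _ _ hIJ hI => hI.mono hf hIJ⟩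

end Cofinality

section Minimals

variable {α : Type*} [PartialOrder α]

lemma IsUpperSet.upperClosure_setOf_minimal [WellFoundedLT α] {s : Set α} (hs : IsUpperSet s) :
    (upperClosure {x | Minimal (· ∈ s) x} : Set α) = s := by
  ext x
  refine ⟨fun ⟨a, ha, hax⟩ => hs hax ha.prop, fun hx => ?_⟩
  obtain ⟨a, hax, ha⟩ := exists_minimal_le_of_wellFoundedLT (· ∈ s) x hx
  exact ⟨a, ha, hax⟩

variable (α) in
def upperSetEquivAntichain [OrderBot α] [WellFoundedLT α] :
    {s : Set α // ⊥ ∉ s ∧ IsUpperSet s} ≃ {A : Set α // IsAntichain (· ≤ ·) A ∧ ⊥ ∉ A} where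
  toFun s := ⟨{x | Minimal (· ∈ s.1) x}, setOfPred_minimal_antichain _, fun h => s.2.1 h.prop⟩
  invFun A := ⟨upperClosure A.1, fun ⟨a, ha, hab⟩ => A.2.2 (le_bot_iff.1 hab ▸ ha),
    (upperClosure A.1).upper⟩
  left_inv s := Subtype.ext s.2.2.upperClosure_setOf_minimal
  right_inv A := Subtype.ext (Set.ext fun _ => A.2.1.minimal_mem_upperClosure_iff_mem)

end Minimals

/-- a family `𝔍` of subsets of `N` is the cofinality class of some
continuous map iff it consists of nonempty sets and is upward closed; consequently
the cofinality classes are in bijection with the antichains of `𝒫(N) \ {∅}`, each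
class corresponding to the antichain of its minimal elements. -/
theorem cofClass_characterization_and_antichain_bijection (n : ℕ) :
    (∀ 𝔍 : Set (Finset (Fin n)),
      (∃ f : (Fin n → LongRay) → LongRay, Continuous f ∧ cofClass n f = 𝔍) ↔
        (∅ ∉ 𝔍 ∧ ∀ I ∈ 𝔍, ∀ J : Finset (Fin n), I ⊆ J → J ∈ 𝔍)) ∧
    ∃ e : {𝔍 : Set (Finset (Fin n)) //
            ∃ f : (Fin n → LongRay) → LongRay, Continuous f ∧ cofClass n f = 𝔍} ≃
          {A : Set (Finset (Fin n)) // IsAntichain (· ⊆ ·) A ∧ ∅ ∉ A},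
      ∀ 𝔍, ((e 𝔍 : {A : Set (Finset (Fin n)) // IsAntichain (· ⊆ ·) A ∧ ∅ ∉ A}) :
              Set (Finset (Fin n))) =
            {I | I ∈ (𝔍 : Set (Finset (Fin n))) ∧
                 ∀ J ∈ (𝔍 : Set (Finset (Fin n))), J ⊆ I → J = I} := by
  have hupper (𝔍 : Set (Finset (Fin n))) :
      IsUpperSet 𝔍 ↔ ∀ I ∈ 𝔍, ∀ J : Finset (Fin n), I ⊆ J → J ∈ 𝔍 :=
    ⟨fun h I hI J hIJ => h hIJ hI, fun h I J hIJ hI => h I hI J hIJ⟩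
  refine ⟨fun 𝔍 => (exists_continuous_cofClass_eq_iff 𝔍).trans
    (and_congr_right' (hupper 𝔍)), (Equiv.subtypeEquivRight
      exists_continuous_cofClass_eq_iff).trans (upperSetEquivAntichain _), fun 𝔍 => ?_⟩
  ext I
  exact minimal_iff.trans
    (and_congr_right' (forall₂_congr fun _ _ => imp_congr_right fun _ => eq_comm))
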